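/- Let p be a prime and n a positive integer. If A ⊆ ℤ_p × ℤ_{p^n} is a tiling set (i.e., A tiles ℤ_p × ℤ_{p^n}) and |A| = p, then A is a spectral set. -/

import Mathlib

open Complex Pointwise

/-- The inner product on `ℤ_p × ℤ_{p^n}`: `⟨u,v⟩ = p^(n-1)·u₁·v₁ + u₂·v₂` in `ℤ_{p^n}`. -/
def inn (p n : ℕ) (u v : ZMod p × ZMod (p ^ n)) : ZMod (p ^ n) :=
  (p : ZMod (p ^ n)) ^ (n - 1) * (u.1.val : ZMod (p ^ n)) * (v.1.val : ZMod (p ^ n)) +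
    u.2 * v.2

/-- The character `χ_g(h) = e^(2πi⟨g,h⟩/p^n)`. -/
noncomputable def chi (p n : ℕ) (g h : ZMod p × ZMod (p ^ n)) : ℂ :=
  Complex.exp (2 * Real.pi * Complex.I * ((inn p n g h).val : ℂ) / ((p : ℂ) ^ n))

/-- `χ_g(A) = Σ_{a ∈ A} χ_g(a)`. -/
noncomputable def chiSum (p n : ℕ) (g : ZMod p × ZMod (p ^ n))
    (A : Finset (ZMod p × ZMod (p ^ n))) : ℂ :=
  ∑ a ∈ A, chi p n g a

/-- The zero set `Z_A = {g : χ_g(A) = 0}`. -/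
def zeroSet (p n : ℕ) (A : Finset (ZMod p × ZMod (p ^ n))) :
    Set (ZMod p × ZMod (p ^ n)) :=
  {g | chiSum p n g A = 0}

/-- `(A,B)` is a spectral pair: `|A| = |B|` and `χ_{b-b'}(A) = 0` for distinct `b,b' ∈ B`. -/
def SpectralPair (p n : ℕ) (A B : Finset (ZMod p × ZMod (p ^ n))) : Prop :=
  A.card = B.card ∧ ∀ b ∈ B, ∀ b' ∈ B, b ≠ b' → chiSum p n (b - b') A = 0

/-- `A` is a spectral set: some `B` makes `(A,B)` a spectral pair. -/
def SpectralSet (p n : ℕ) (A : Finset (ZMod p × ZMod (p ^ n))) : Prop :=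
  ∃ B : Finset (ZMod p × ZMod (p ^ n)), SpectralPair p n A B

/-- `(A,T)` is a tiling pair: every `g` has a unique representation `g = a + t`, `a ∈ A`, `t ∈ T`. -/
def TilingPair (p n : ℕ) (A T : Finset (ZMod p × ZMod (p ^ n))) : Prop :=
  ∀ g : ZMod p × ZMod (p ^ n),
    ∃! x : (ZMod p × ZMod (p ^ n)) × (ZMod p × ZMod (p ^ n)),
      x.1 ∈ A ∧ x.2 ∈ T ∧ g = x.1 + x.2

/-- `A` tiles `ℤ_p × ℤ_{p^n}` by translation. -/
def Tiles (p n : ℕ) (A : Finset (ZMod p × ZMod (p ^ n))) : Prop :=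
  ∃ T : Finset (ZMod p × ZMod (p ^ n)), TilingPair p n A T

/-!
If `(A, T)` is a tiling pair and `g ≠ 0`, then `χ_g(A) χ_g(T) = ∑_{h ∈ G} χ_g(h) = 0`. As
`|T| = p^n` lies strictly between `0` and `|G|`, Fourier inversion forbids `χ_g(T) = 0` for all
`g ≠ 0`, so `χ_g(A) = 0` for some `g`. The values of `χ_g` are `p^n`-th roots of unity, and a
vanishing sum of such roots stays vanishing under the Galois action `ζ ↦ ζ^u`, `p ∤ u`; hence
`χ_{k g}(A) = 0` whenever `p ∤ k`, and `{0, g, …, (p-1) g}` is a spectrum of `A`.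
-/

open Finset Polynomial

theorem IsPrimitiveRoot.aeval_pow_eq_zero_of_coprime {K : Type*} [Field K] [CharZero K] {μ : K}
    {N : ℕ} (hμ : IsPrimitiveRoot μ N) (hN : 0 < N) {P : ℤ[X]} (hP : aeval μ P = 0) {m : ℕ}
    (hm : m.Coprime N) : aeval (μ ^ m) P = 0 := by
  obtain ⟨Q, rfl⟩ := minpoly.isIntegrallyClosed_dvd (hμ.isIntegral hN) hP
  rw [map_mul, hμ.minpoly_eq_pow_coprime hm, minpoly.aeval, zero_mul]

namespace ZMod

variable {N : ℕ} [NeZero N]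

theorem isPrimitiveRoot_stdAddChar_one : IsPrimitiveRoot (stdAddChar (1 : ZMod N)) N := by
  rw [← Nat.cast_one, stdAddChar_apply, toCircle_natCast]
  simpa [mul_div_assoc] using Complex.isPrimitiveRoot_exp N (NeZero.ne N)

theorem stdAddChar_natCast_eq_pow (k : ℕ) :
    stdAddChar (k : ZMod N) = stdAddChar (1 : ZMod N) ^ k := by
  rw [← AddChar.map_nsmul_eq_pow, nsmul_one]

theorem sum_stdAddChar_mul_eq_zero {ι : Type*} {s : Finset ι} {f : ι → ZMod N}
    (hf : ∑ i ∈ s, stdAddChar (f i) = 0) {u : ZMod N} (hu : IsUnit u) :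
    ∑ i ∈ s, stdAddChar (u * f i) = 0 := by
  have hcop : u.val.Coprime N := by
    rwa [← isUnit_iff_coprime, natCast_zmod_val]
  have key := isPrimitiveRoot_stdAddChar_one.aeval_pow_eq_zero_of_coprime (NeZero.pos N)
    (P := ∑ i ∈ s, X ^ (f i).val) (by simpa [← stdAddChar_natCast_eq_pow]) hcop
  simp only [map_sum, map_pow, aeval_X, ← stdAddChar_natCast_eq_pow, natCast_zmod_val] at key
  refine (sum_congr rfl fun i _ => ?_).trans key
  rw [← AddChar.map_nsmul_eq_pow, nsmul_eq_mul, natCast_zmod_val, mul_comm]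

theorem isUnit_intCast_of_natAbs_lt {p n : ℕ} (hp : p.Prime) (hn : 1 ≤ n) {z : ℤ} (hz : z ≠ 0)
    (hzp : z.natAbs < p) : IsUnit (z : ZMod (p ^ n)) := by
  obtain ⟨m, rfl | rfl⟩ := Int.eq_nat_or_neg z <;>
  · have hm : IsUnit (m : ZMod (p ^ n)) := (isUnit_natCast_iff_not_dvd_pow hp hn).mpr
      (Nat.not_dvd_of_pos_of_lt (by omega) (by simpa using hzp))
    simpa using hm

end ZMod

section Pairing

variable {p n : ℕ}

theorem natCast_pow_pred_mul_self : (p : ZMod (p ^ n)) ^ (n - 1) * p = 0 := by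
  cases n with
  | zero => exact (ZMod.subsingleton_iff.mpr (pow_zero p)).elim _ _
  | succ n => rw [Nat.add_sub_cancel, ← pow_succ, ← Nat.cast_pow, ZMod.natCast_self]

theorem natCast_pow_pred_mul_val_add [NeZero p] (x y : ZMod p) :
    (p : ZMod (p ^ n)) ^ (n - 1) * ((x + y).val : ZMod (p ^ n)) =
      (p : ZMod (p ^ n)) ^ (n - 1) * x.val + (p : ZMod (p ^ n)) ^ (n - 1) * y.val := by
  have h := congrArg (Nat.cast : ℕ → ZMod (p ^ n)) (Nat.mod_add_div (x.val + y.val) p)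
  push_cast at h
  rw [ZMod.val_add]
  linear_combination (p : ZMod (p ^ n)) ^ (n - 1) * h -
    (((x.val + y.val) / p : ℕ) : ZMod (p ^ n)) * natCast_pow_pred_mul_self

theorem inn_comm (u v : ZMod p × ZMod (p ^ n)) : inn p n u v = inn p n v u := by
  unfold inn; ring

theorem inn_add_right [NeZero p] (u v w : ZMod p × ZMod (p ^ n)) :
    inn p n u (v + w) = inn p n u v + inn p n u w := by
  simp only [inn, Prod.fst_add, Prod.snd_add]
  linear_combination (u.1.val : ZMod (p ^ n)) * natCast_pow_pred_mul_val_add (n := n) v.1 w.1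

theorem exists_inn_ne_zero [Fact p.Prime] (hn : 1 ≤ n) {u : ZMod p × ZMod (p ^ n)} (hu : u ≠ 0) :
    ∃ v, inn p n u v ≠ 0 := by
  by_cases h2 : u.2 = 0
  · refine ⟨(1, 0), ?_⟩
    have h1 : u.1 ≠ 0 := fun h1 => hu (Prod.ext h1 h2)
    rw [inn, ZMod.val_one, mul_zero, add_zero, Nat.cast_one, mul_one, ← Nat.cast_pow,
      ← Nat.cast_mul, Ne, ZMod.natCast_eq_zero_iff]
    intro hdvd
    replace hdvd : p ^ (n - 1) * p ∣ p ^ (n - 1) * u.1.val := by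
      rwa [pow_sub_one_mul (by omega)]
    rw [Nat.mul_dvd_mul_iff_left (pow_pos (Fact.out : p.Prime).pos _), ← ZMod.natCast_eq_zero_iff,
      ZMod.natCast_zmod_val] at hdvd
    exact h1 hdvd
  · exact ⟨(0, 1), by simpa [inn] using h2⟩

variable (p n)

def innHom [NeZero p] (u : ZMod p × ZMod (p ^ n)) : ZMod p × ZMod (p ^ n) →+ ZMod (p ^ n) :=
  AddMonoidHom.mk' (inn p n u) (inn_add_right u)

noncomputable def chiChar [NeZero p] (u : ZMod p × ZMod (p ^ n)) :
    AddChar (ZMod p × ZMod (p ^ n)) ℂ :=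
  ZMod.stdAddChar.compAddMonoidHom (innHom p n u)

variable {p n}

theorem chiChar_apply [NeZero p] (u v : ZMod p × ZMod (p ^ n)) :
    chiChar p n u v = chi p n u v := by
  rw [chiChar, AddChar.compAddMonoidHom_apply, ZMod.stdAddChar_apply, ZMod.toCircle_apply, chi]
  push_cast
  rfl

theorem chi_eq_stdAddChar_inn [NeZero p] (u v : ZMod p × ZMod (p ^ n)) :
    chi p n u v = ZMod.stdAddChar (inn p n u v) := (chiChar_apply u v).symm

theorem chi_comm (u v : ZMod p × ZMod (p ^ n)) : chi p n u v = chi p n v u := by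
  rw [chi, chi, inn_comm]

theorem chi_add_right [NeZero p] (u v w : ZMod p × ZMod (p ^ n)) :
    chi p n u (v + w) = chi p n u v * chi p n u w := by
  simp only [← chiChar_apply, AddChar.map_add_eq_mul]

theorem chiChar_eq_zero_iff [Fact p.Prime] (hn : 1 ≤ n) {u : ZMod p × ZMod (p ^ n)} :
    chiChar p n u = 0 ↔ u = 0 := by
  refine ⟨fun h => ?_, ?_⟩
  · by_contra hu
    obtain ⟨v, hv⟩ := exists_inn_ne_zero hn hu
    have := DFunLike.congr_fun h v
    rw [AddChar.zero_apply, ← (ZMod.stdAddChar (N := p ^ n)).map_zero_eq_one] at this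
    exact hv (ZMod.injective_stdAddChar this)
  · rintro rfl
    ext v
    simp [chiChar, innHom, inn]

theorem sum_chi_eq_ite [Fact p.Prime] (hn : 1 ≤ n) (u : ZMod p × ZMod (p ^ n)) :
    ∑ v, chi p n u v = if u = 0 then (p : ℂ) ^ (n + 1) else 0 := by
  classical
  simp only [← chiChar_apply, AddChar.sum_eq_ite, chiChar_eq_zero_iff hn, Fintype.card_prod,
    ZMod.card]
  push_cast
  ring_nf

theorem chiSum_zero [NeZero p] (A : Finset (ZMod p × ZMod (p ^ n))) :
    chiSum p n 0 A = A.card := by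
  simp [chiSum, chi_comm 0, ← chiChar_apply]

theorem chiSum_zsmul_eq_zero [NeZero p] {A : Finset (ZMod p × ZMod (p ^ n))}
    {g : ZMod p × ZMod (p ^ n)} (hg : chiSum p n g A = 0) {z : ℤ} (hz : IsUnit (z : ZMod (p ^ n))) :
    chiSum p n (z • g) A = 0 := by
  have hzg : ∀ a, chi p n (z • g) a = ZMod.stdAddChar ((z : ZMod (p ^ n)) * inn p n a g) := by
    intro a
    rw [chi_comm, chi_eq_stdAddChar_inn, ← zsmul_eq_mul]
    exact congrArg _ (map_zsmul (innHom p n a) z g)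
  rw [chiSum, sum_congr rfl fun a _ => hzg a]
  refine ZMod.sum_stdAddChar_mul_eq_zero ?_ hz
  simpa only [chiSum, chi_comm g, chi_eq_stdAddChar_inn] using hg

end Pairing

section Tiling

variable {p n : ℕ} {A T : Finset (ZMod p × ZMod (p ^ n))}

theorem TilingPair.sum_add [NeZero p] {M : Type*} [AddCommMonoid M] (hT : TilingPair p n A T)
    (f : ZMod p × ZMod (p ^ n) → M) : ∑ a ∈ A, ∑ t ∈ T, f (a + t) = ∑ g, f g := by
  rw [← sum_product' (f := fun a t => f (a + t))]
  refine sum_bij (fun x _ => x.1 + x.2) (fun _ _ => mem_univ _) ?_ ?_ fun _ _ => rfl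
  · intro x hx y hy hxy
    obtain ⟨_, _, hunique⟩ := hT (x.1 + x.2)
    rw [mem_product] at hx hy
    exact (hunique x ⟨hx.1, hx.2, rfl⟩).trans (hunique y ⟨hy.1, hy.2, hxy⟩).symm
  · intro g _
    obtain ⟨x, ⟨ha, ht, hg⟩, -⟩ := hT g
    exact ⟨x, mem_product.mpr ⟨ha, ht⟩, hg.symm⟩

theorem TilingPair.card_mul_card [NeZero p] (hT : TilingPair p n A T) :
    A.card * T.card = p ^ (n + 1) := by
  have h := TilingPair.sum_add hT fun _ => (1 : ℕ)
  simp only [sum_const, smul_eq_mul, mul_one, card_univ, Fintype.card_prod, ZMod.card] at h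
  rw [h, pow_succ']

theorem TilingPair.chiSum_mul_chiSum_eq_zero [Fact p.Prime] (hn : 1 ≤ n) (hT : TilingPair p n A T)
    {g : ZMod p × ZMod (p ^ n)} (hg : g ≠ 0) : chiSum p n g A * chiSum p n g T = 0 := by
  simp only [chiSum, sum_mul_sum, ← chi_add_right]
  rw [TilingPair.sum_add hT, sum_chi_eq_ite hn, if_neg hg]

theorem exists_chiSum_eq_zero [Fact p.Prime] (hn : 1 ≤ n) (hA : Tiles p n A)
    (hcard : A.card = p) : ∃ g, chiSum p n g A = 0 := by
  have hp : p.Prime := Fact.out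
  obtain ⟨T, hT⟩ := hA
  by_contra! hA0
  have hTcard : T.card = p ^ n := by
    have h := TilingPair.card_mul_card hT
    rwa [hcard, pow_succ', Nat.mul_left_cancel_iff hp.pos] at h
  have hT0 : ∀ g ≠ 0, chiSum p n g T = 0 := fun g hg =>
    (mul_eq_zero.mp (TilingPair.chiSum_mul_chiSum_eq_zero hn hT hg)).resolve_left (hA0 g)
  -- Fourier inversion at `0`: `∑ g, χ_g(T) = |G| · 1_T(0)`, while only `g = 0` contributes.
  have hsum : ∑ g, chiSum p n g T =
      if (0 : ZMod p × ZMod (p ^ n)) ∈ T then (p : ℂ) ^ (n + 1) else 0 := by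
    simp only [chiSum]
    rw [sum_comm]
    simp only [chi_comm _ (_ : ZMod p × ZMod (p ^ n)), sum_chi_eq_ite hn, sum_ite_eq']
  rw [sum_eq_single 0 (fun g _ hg => hT0 g hg) (by simp), chiSum_zero, hTcard] at hsum
  split_ifs at hsum
  · exact (Nat.pow_lt_pow_right hp.one_lt n.lt_succ_self).ne (by exact_mod_cast hsum)
  · exact (pow_pos hp.pos n).ne' (by exact_mod_cast hsum)

end Tiling


theorem spectralSet_of_chiSum_eq_zero {p n : ℕ} [Fact p.Prime] (hn : 1 ≤ n)
    {A : Finset (ZMod p × ZMod (p ^ n))} {g : ZMod p × ZMod (p ^ n)} (hg : chiSum p n g A = 0)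
    (hcard : A.card = p) : SpectralSet p n A := by
  have hp : p.Prime := Fact.out
  have hdiff : ∀ k ∈ range p, ∀ k' ∈ range p, k ≠ k' →
      chiSum p n ((k : ℤ) • g - (k' : ℤ) • g) A = 0 := by
    intro k hk k' hk' hne
    rw [mem_range] at hk hk'
    rw [← sub_smul]
    exact chiSum_zsmul_eq_zero hg (ZMod.isUnit_intCast_of_natAbs_lt hp hn (by omega) (by omega))
  -- `B = {0, g, …, (p-1)g}`; its elements are distinct because `χ_0(A) = p ≠ 0`.
  have hinj : Set.InjOn (fun k : ℕ => (k : ℤ) • g) (range p) := by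
    intro k hk k' hk' heq
    by_contra hne
    have h := hdiff k hk k' hk' hne
    rw [show (k : ℤ) • g = (k' : ℤ) • g from heq, sub_self, chiSum_zero, hcard] at h
    exact hp.ne_zero (by exact_mod_cast h)
  refine ⟨(range p).image fun k : ℕ => (k : ℤ) • g, ?_, ?_⟩
  · rw [card_image_of_injOn hinj, card_range, hcard]
  · simp only [mem_image]
    rintro _ ⟨k, hk, rfl⟩ _ ⟨k', hk', rfl⟩ hne
    exact hdiff k hk k' hk' fun h => hne (by rw [h])

/-- A tile of size `p` is a spectral set. -/
theorem spectral_of_tile_card_p (p n : ℕ) (hp : p.Prime) (hn : 1 ≤ n)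
    (A : Finset (ZMod p × ZMod (p ^ n))) (hA : Tiles p n A) (hcard : A.card = p) :
    SpectralSet p n A := by
  have := Fact.mk hp
  obtain ⟨g, hg⟩ := exists_chiSum_eq_zero hn hA hcard
  exact spectralSet_of_chiSum_eq_zero hn hg hcard
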